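/- Bypass exclusion on one path: Let P1 = (v1 = u, v2, ..., v_m = root) and P2 be two internally vertex-disjoint paths from u to root. Suppose there is a path P3 from v_i ∈ P1 to v_j ∈ P1 (i < j) whose only common vertices with P1 ∪ P2 are v_i and v_j. Then no vertex v_k of P1 with i < k < j belongs to any double-vertex dominator of u. -/

import Mathlib

/-- A nonempty directed path `p` from `a` to `b` in the graph with edge relation `E`. -/
def IsPath {V : Type*} (E : V → V → Prop) (p : List V) (a b : V) : Prop :=
  p ≠ [] ∧ p.head? = some a ∧ p.getLast? = some b ∧ p.Chain' E

/-- `A` dominates `B` with respect to `root`: every path from a vertex of `B` to `root`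
contains a vertex of `A`. -/
def Dominates {V : Type*} (E : V → V → Prop) (root : V) (A B : Set V) : Prop :=
  ∀ b ∈ B, ∀ p : List V, IsPath E p b root → ∃ a ∈ A, a ∈ p

/-- `A` is a dominator of `B`: it dominates `B` and no proper subset `A \ {v}` does. -/
def IsDominator {V : Type*} (E : V → V → Prop) (root : V) (A B : Set V) : Prop :=
  Dominates E root A B ∧ ∀ v ∈ A, ¬ Dominates E root (A \ {v}) B

/-- `{v, w}` is a double-vertex dominator of `u`. -/
def DoubleDom {V : Type*} (E : V → V → Prop) (root : V) (u v w : V) : Prop :=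
  v ≠ w ∧ Dominates E root {v, w} {u} ∧
    ¬ Dominates E root {v} {u} ∧ ¬ Dominates E root {w} {u}

/-- The edge relation `E` is acyclic. -/
def Acyclic {V : Type*} (E : V → V → Prop) : Prop :=
  ∀ a b, E a b → ¬ Relation.ReflTransGen E b a

/-!
If `{v, w}` dominated `u` with `v = p₁[k]`, then `w` would have to lie on every path from `u`
to `root` that avoids `v`. Both `p₂` and the path obtained from `p₁` by replacing its segment
from `v_i` to `v_j` by `p₃` avoid `v` (acyclicity makes `p₁` simple); the latter runs inside
`p₁ ∪ p₃`, and `p₃` meets `p₂` only in vertices of `p₁`, so `w` lies on `p₁ ∩ p₂ = {u, root}`.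
But `{u}` and `{root}` dominate `u` on their own.
-/

namespace List

variable {α : Type*} {p : List α} {k n : ℕ}

theorem Nodup.getElem_notMem_take (hp : p.Nodup) (hk : k < p.length) (h : n ≤ k) :
    p[k] ∉ p.take n := by
  rw [mem_take_iff_getElem]
  rintro ⟨m, hm, heq⟩
  have := hp.getElem_inj_iff.1 heq
  omega

theorem Nodup.getElem_notMem_drop (hp : p.Nodup) (hk : k < p.length) (h : k < n) :
    p[k] ∉ p.drop n := by
  rw [mem_drop_iff_getElem]
  rintro ⟨m, hm, heq⟩
  have := hp.getElem_inj_iff.1 heq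
  omega

end List

section Paths

variable {V : Type*} {E : V → V → Prop}

theorem Acyclic.not_transGen_self (hE : Acyclic E) (a : V) : ¬ Relation.TransGen E a a :=
  fun h => let ⟨_, hac, hca⟩ := Relation.TransGen.head'_iff.mp h
  hE _ _ hac hca

theorem Acyclic.nodup_of_isChain (hE : Acyclic E) {l : List V} (h : l.IsChain E) : l.Nodup :=
  (List.isChain_iff_pairwise.mp (h.imp fun _ _ => Relation.TransGen.single)).imp
    fun {x y} (hxy : Relation.TransGen E x y) (h : x = y) => hE.not_transGen_self y (h ▸ hxy)

namespace IsPath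

variable {p q : List V} {a b c : V}

theorem eq_cons (h : IsPath E p a b) : p = a :: p.tail := by
  obtain ⟨hne, hhead, -, -⟩ := h
  obtain ⟨x, t, rfl⟩ := List.exists_cons_of_ne_nil hne
  simp_all

theorem head_mem (h : IsPath E p a b) : a ∈ p := by
  rw [h.eq_cons]; exact List.mem_cons_self

theorem last_mem (h : IsPath E p a b) : b ∈ p :=
  List.mem_of_getLast? h.2.2.1

theorem eq_dropLast_append (h : IsPath E p a b) : p = p.dropLast ++ [b] := by
  obtain ⟨hne, -, hlast, -⟩ := h
  obtain ⟨t, x, rfl⟩ := (List.eq_nil_or_concat' p).resolve_left hne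
  simp_all

theorem append (hp : IsPath E p a b) (hq : IsPath E q b c) : IsPath E (p ++ q.tail) a c := by
  obtain ⟨s, rfl⟩ : ∃ s, p = s ++ [b] := ⟨_, hp.eq_dropLast_append⟩
  obtain ⟨t, rfl⟩ : ∃ t, q = b :: t := ⟨_, hq.eq_cons⟩
  obtain ⟨-, hsa, -, hsE⟩ := hp
  obtain ⟨-, -, htc, htE⟩ := hq
  refine ⟨by simp, by simpa [List.head?_append] using hsa, ?_, ?_⟩
  · rw [List.getLast?_cons] at htc
    rw [List.tail_cons, List.getLast?_append, List.getLast?_concat]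
    cases ht : t.getLast? <;> simp_all
  · exact hsE.append_overlap htE (List.cons_ne_nil _ _)

theorem take (h : IsPath E p a b) {n : ℕ} (hn : n < p.length) :
    IsPath E (p.take (n + 1)) a p[n] := by
  obtain ⟨hne, ha, -, hE⟩ := h
  refine ⟨by simp [hne], by simpa [List.head?_take] using ha, ?_, hE.take _⟩
  simp [List.getLast?_take, hn]

theorem drop (h : IsPath E p a b) {n : ℕ} (hn : n < p.length) :
    IsPath E (p.drop n) p[n] b := by
  obtain ⟨-, -, hb, hE⟩ := h
  refine ⟨by simpa using hn, by simp [List.head?_drop, hn], ?_, hE.drop _⟩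
  simpa [List.getLast?_drop, Nat.not_le.mpr hn] using hb

end IsPath

def bypass (p : List V) (i j : ℕ) (r : List V) : List V :=
  p.take (i + 1) ++ r.tail ++ p.drop (j + 1)

section Bypass

variable {p r : List V} {a b x : V} {i j k : ℕ}

theorem IsPath.bypass (h : IsPath E p a b) (hi : i < p.length) (hj : j < p.length)
    (hr : IsPath E r p[i] p[j]) : IsPath E (bypass p i j r) a b := by
  simpa only [_root_.bypass, List.tail_drop] using ((h.take hi).append hr).append (h.drop hj)

theorem mem_of_mem_bypass (hx : x ∈ bypass p i j r) : x ∈ p ∨ x ∈ r := by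
  simp only [bypass, List.mem_append] at hx
  rcases hx with (hx | hx) | hx
  · exact .inl (List.mem_of_mem_take hx)
  · exact .inr (List.mem_of_mem_tail hx)
  · exact .inl (List.mem_of_mem_drop hx)

theorem getElem_notMem_bypass (hp : p.Nodup) (hk : k < p.length) (hik : i < k) (hkj : k < j)
    (hr : p[k] ∉ r) : p[k] ∉ bypass p i j r := by
  simp only [bypass, List.mem_append, not_or]
  exact ⟨⟨hp.getElem_notMem_take hk hik, fun h => hr (List.mem_of_mem_tail h)⟩,
    hp.getElem_notMem_drop hk (by omega)⟩

end Bypass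

namespace DoubleDom

variable {root u v w : V} {p : List V}

theorem symm (h : DoubleDom E root u v w) : DoubleDom E root u w v := by
  obtain ⟨hvw, hdom, hv, hw⟩ := h
  exact ⟨hvw.symm, Set.pair_comm v w ▸ hdom, hw, hv⟩

theorem mem_of_notMem (h : DoubleDom E root u v w) (hp : IsPath E p u root) (hv : v ∉ p) :
    w ∈ p := by
  obtain ⟨x, hx, hxp⟩ := h.2.1 u rfl p hp
  rcases hx with rfl | rfl
  · exact absurd hxp hv
  · exact hxp

theorem right_ne_source (h : DoubleDom E root u v w) : w ≠ u := by
  rintro rfl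
  exact h.2.2.2 fun _ hb _ hp => ⟨_, rfl, hb ▸ hp.head_mem⟩

theorem right_ne_root (h : DoubleDom E root u v w) : w ≠ root := by
  rintro rfl
  exact h.2.2.2 fun _ _ _ hp => ⟨_, rfl, hp.last_mem⟩

theorem left_ne_source (h : DoubleDom E root u v w) : v ≠ u := h.symm.right_ne_source

theorem left_ne_root (h : DoubleDom E root u v w) : v ≠ root := h.symm.right_ne_root

end DoubleDom

end Paths

theorem bypass_exclusion_general {V : Type*} (E : V → V → Prop) (root : V)
    (hacyc : Acyclic E) (u : V) (p₁ p₂ : List V)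
    (h₁ : IsPath E p₁ u root) (h₂ : IsPath E p₂ u root)
    (hdisj : ∀ x, x ∈ p₁ → x ∈ p₂ → x = u ∨ x = root)
    (i j : Fin p₁.length) (p₃ : List V)
    (h₃ : IsPath E p₃ (p₁.get i) (p₁.get j))
    (h₃disj : ∀ x ∈ p₃, (x ∈ p₁ ∨ x ∈ p₂) → x = p₁.get i ∨ x = p₁.get j) :
    ∀ k : Fin p₁.length, i < k → k < j →
      ∀ w, ¬ DoubleDom E root u (p₁.get k) w := by
  intro k hik hkj w hdd
  simp only [List.get_eq_getElem] at h₃ h₃disj hdd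
  have hnodup := hacyc.nodup_of_isChain h₁.2.2.2
  have hv₂ : p₁[k] ∉ p₂ := fun hv =>
    (hdisj _ (List.getElem_mem _) hv).elim hdd.left_ne_source hdd.left_ne_root
  have hv₃ : p₁[k] ∉ p₃ := fun hv =>
    (h₃disj _ hv (.inl (List.getElem_mem _))).elim
      (fun h => hik.ne' (Fin.ext (hnodup.getElem_inj_iff.1 h)))
      (fun h => hkj.ne (Fin.ext (hnodup.getElem_inj_iff.1 h)))
  have hw₂ := hdd.mem_of_notMem h₂ hv₂
  have hwq := hdd.mem_of_notMem (h₁.bypass i.isLt j.isLt h₃)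
    (getElem_notMem_bypass hnodup k.isLt hik hkj hv₃)
  have hw₁ : w ∈ p₁ := (mem_of_mem_bypass hwq).elim id fun hw₃ =>
    (h₃disj w hw₃ (.inr hw₂)).elim (· ▸ List.getElem_mem _) (· ▸ List.getElem_mem _)
  exact (hdisj w hw₁ hw₂).elim hdd.right_ne_source hdd.right_ne_root

theorem bypass_exclusion {V : Type*} [Fintype V] (E : V → V → Prop) (root : V)
    (hacyc : Acyclic E) (u : V) (p₁ p₂ : List V)
    (h₁ : IsPath E p₁ u root) (h₂ : IsPath E p₂ u root)
    (hdisj : ∀ x, x ∈ p₁ → x ∈ p₂ → x = u ∨ x = root)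
    (i j : Fin p₁.length) (hij : i < j) (p₃ : List V)
    (h₃ : IsPath E p₃ (p₁.get i) (p₁.get j))
    (h₃disj : ∀ x ∈ p₃, (x ∈ p₁ ∨ x ∈ p₂) → x = p₁.get i ∨ x = p₁.get j) :
    ∀ k : Fin p₁.length, i < k → k < j →
      ∀ w, ¬ DoubleDom E root u (p₁.get k) w :=
  bypass_exclusion_general E root hacyc u p₁ p₂ h₁ h₂ hdisj i j p₃ h₃ h₃disj
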